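/- For n ≥ 5, with G₁ = {M ∈ M_n(ℤ) : M·𝟙 = 0, Mᵀ = M}, G₂ = {M : M·𝟙 = 0, Mᵀ = -M}, and G₃ = {M : M·𝟙 = 0, Mᵀ = M, tr(M) = 0}, every element of 2·G₃ lies in the ℤ-span of the commutators ⟨A, B⟩ = AB - BA with A ∈ G₁ and B ∈ G₂. -/

import Mathlib

/-!
The bracket of `X_{ij} ∈ G₁` with `Y_{ijk} ∈ G₂` is `2 (X_{ik} - X_{jk})`, and chaining such
differences puts `2 (X_{ab} - X_{cd})` into the span for any two off-diagonal pairs. On the other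
hand every `M ∈ G₁` equals `-∑_{a<b} M_{ab} X_{ab}`; as `tr X_{ab} = 2`, the coefficients of
`M ∈ G₃` sum to zero, so `M` is an integral combination of such differences.
-/

open Matrix

/-- `X_{ij} = E_{ii} + E_{jj} - E_{ij} - E_{ji}`. -/
def Xmat (n : ℕ) (i j : Fin n) : Matrix (Fin n) (Fin n) ℤ :=
  Matrix.single i i 1 + Matrix.single j j 1
    - Matrix.single i j 1 - Matrix.single j i 1

/-- `Y_{ijk} = (E_{ij} - E_{ji}) - (E_{ik} - E_{ki}) + (E_{jk} - E_{kj})`. -/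
def Ymat (n : ℕ) (i j k : Fin n) : Matrix (Fin n) (Fin n) ℤ :=
  (Matrix.single i j 1 - Matrix.single j i 1)
    - (Matrix.single i k 1 - Matrix.single k i 1)
    + (Matrix.single j k 1 - Matrix.single k j 1)

theorem Finset.sum_sum_eq_two_smul_sum_lt {ι β : Type*} [Fintype ι] [LinearOrder ι]
    [AddCommMonoid β] (f : ι → ι → β) (hf : ∀ a b, f a b = f b a)
    (hdiag : ∀ a, f a a = 0) :
    ∑ a, ∑ b, f a b = 2 • ∑ p : ι × ι with p.1 < p.2, f p.1 p.2 := by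
  have hsplit : ∀ a b, f a b = (if a < b then f a b else 0) + (if b < a then f b a else 0) := by
    intro a b
    rcases lt_trichotomy a b with h | rfl | h
    · simp [h, h.not_gt]
    · simp [hdiag]
    · simp [h, h.not_gt, hf a b]
  calc ∑ a, ∑ b, f a b
      = ∑ a, ∑ b, (if a < b then f a b else 0)
          + ∑ a, ∑ b, (if b < a then f b a else 0) := by
        simp only [← Finset.sum_add_distrib, ← hsplit]
    _ = 2 • ∑ p : ι × ι with p.1 < p.2, f p.1 p.2 := by
        rw [Finset.sum_comm (f := fun a b => if b < a then f b a else 0), two_smul,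
          Finset.sum_filter, Fintype.sum_prod_type]

theorem Submodule.sum_smul_mem_of_sum_eq_zero {R V ι : Type*} [Ring R] [AddCommGroup V]
    [Module R V] (L : Submodule R V) {s : Finset ι} {c : ι → R} {v : ι → V}
    (hc : ∑ i ∈ s, c i = 0) (hv : ∀ i ∈ s, ∀ j ∈ s, v i - v j ∈ L) :
    ∑ i ∈ s, c i • v i ∈ L := by
  rcases s.eq_empty_or_nonempty with rfl | ⟨j, hj⟩
  · simp
  · have hshift : ∑ i ∈ s, c i • v i = ∑ i ∈ s, c i • (v i - v j) := by
      simp only [smul_sub, Finset.sum_sub_distrib, ← Finset.sum_smul, hc, zero_smul, sub_zero]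
    rw [hshift]
    exact sum_mem fun i hi => L.smul_mem _ (hv i hi j hj)

def bracketSpan (n : ℕ) : Submodule ℤ (Matrix (Fin n) (Fin n) ℤ) :=
  Submodule.span ℤ
    {C | ∃ A B : Matrix (Fin n) (Fin n) ℤ,
      (A.mulVec (fun _ => 1) = 0 ∧ Aᵀ = A) ∧
      (B.mulVec (fun _ => 1) = 0 ∧ Bᵀ = -B) ∧
      C = A * B - B * A}

section

variable {n : ℕ}

theorem Xmat_comm (a b : Fin n) : Xmat n a b = Xmat n b a := by
  simp only [Xmat]; abel

theorem Xmat_self (a : Fin n) : Xmat n a a = 0 := by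
  simp only [Xmat]; abel

theorem Xmat_mulVec_one (a b : Fin n) : Xmat n a b *ᵥ (fun _ => 1) = 0 := by
  simp only [Xmat, add_mulVec, sub_mulVec, single_mulVec, mul_one]; abel

theorem Xmat_transpose (a b : Fin n) : (Xmat n a b)ᵀ = Xmat n a b := by
  simp only [Xmat, transpose_add, transpose_sub, transpose_single]; abel

theorem Ymat_mulVec_one (a b c : Fin n) : Ymat n a b c *ᵥ (fun _ => 1) = 0 := by
  simp only [Ymat, add_mulVec, sub_mulVec, single_mulVec, mul_one]; abel

theorem Ymat_transpose (a b c : Fin n) : (Ymat n a b c)ᵀ = -Ymat n a b c := by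
  simp only [Ymat, transpose_add, transpose_sub, transpose_single]; abel

theorem trace_Xmat {a b : Fin n} (hab : a ≠ b) : (Xmat n a b).trace = 2 := by
  simp [Xmat, hab, hab.symm]

theorem Xmat_mul_Ymat_sub_Ymat_mul_Xmat {i j k : Fin n} (hij : i ≠ j) (hik : i ≠ k)
    (hjk : j ≠ k) :
    Xmat n i j * Ymat n i j k - Ymat n i j k * Xmat n i j = 2 • (Xmat n i k - Xmat n j k) := by
  simp only [Xmat, Ymat, add_mul, sub_mul, mul_add, mul_sub, single_mul_single_same,
    single_mul_single_of_ne _ _ _ _ hij, single_mul_single_of_ne _ _ _ _ hij.symm,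
    single_mul_single_of_ne _ _ _ _ hik, single_mul_single_of_ne _ _ _ _ hik.symm,
    single_mul_single_of_ne _ _ _ _ hjk, single_mul_single_of_ne _ _ _ _ hjk.symm,
    mul_one, smul_sub, two_smul]
  abel

theorem two_smul_eq_sum_sum_smul_Xmat {M : Matrix (Fin n) (Fin n) ℤ}
    (h1 : M *ᵥ (fun _ => 1) = 0) (h2 : Mᵀ = M) :
    2 • M = ∑ a, ∑ b, (-M a b) • Xmat n a b := by
  have hrow : ∀ r, ∑ s, M r s = 0 := fun r => by
    simpa [mulVec, dotProduct] using congrFun h1 r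
  have hsym : ∀ a b, M b a = M a b := fun a b => (congrFun (congrFun h2 b) a).symm
  ext i j
  simp only [Matrix.sum_apply, Matrix.smul_apply, Xmat, Matrix.add_apply, Matrix.sub_apply,
    single, of_apply, smul_eq_mul, mul_add, mul_sub, mul_ite, mul_one, mul_zero,
    Finset.sum_add_distrib, Finset.sum_sub_distrib, ite_and, Finset.sum_ite_irrel,
    Finset.sum_ite_eq', Finset.sum_const_zero, Finset.mem_univ, if_true,
    Finset.sum_neg_distrib, hrow, hsym]
  by_cases h : i = j <;> simp [h, two_mul]

theorem eq_sum_lt_smul_Xmat {M : Matrix (Fin n) (Fin n) ℤ}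
    (h1 : M *ᵥ (fun _ => 1) = 0) (h2 : Mᵀ = M) :
    M = ∑ p : Fin n × Fin n with p.1 < p.2, (-M p.1 p.2) • Xmat n p.1 p.2 := by
  refine smul_right_injective _ (two_ne_zero (α := ℤ)) ?_
  simp only [ofNat_zsmul]
  have hsym : ∀ a b, M b a = M a b := fun a b => (congrFun (congrFun h2 b) a).symm
  rw [two_smul_eq_sum_sum_smul_Xmat h1 h2, Finset.sum_sum_eq_two_smul_sum_lt]
  · intro a b; rw [hsym, Xmat_comm]
  · intro a; rw [Xmat_self, smul_zero]

theorem two_smul_Xmat_sub_Xmat_mem_bracketSpan_of_ne {i j k : Fin n} (hij : i ≠ j)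
    (hik : i ≠ k) (hjk : j ≠ k) : 2 • (Xmat n i k - Xmat n j k) ∈ bracketSpan n :=
  Submodule.subset_span ⟨Xmat n i j, Ymat n i j k, ⟨Xmat_mulVec_one i j, Xmat_transpose i j⟩,
    ⟨Ymat_mulVec_one i j k, Ymat_transpose i j k⟩,
    (Xmat_mul_Ymat_sub_Ymat_mul_Xmat hij hik hjk).symm⟩

theorem two_smul_Xmat_sub_Xmat_mem_bracketSpan {a b c d : Fin n} (hab : a ≠ b) (hcd : c ≠ d) :
    2 • (Xmat n a b - Xmat n c d) ∈ bracketSpan n := by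
  have hshared : ∀ {a b c : Fin n}, a ≠ b → a ≠ c →
      2 • (Xmat n a b - Xmat n a c) ∈ bracketSpan n := by
    intro a b c hab hac
    rcases eq_or_ne b c with rfl | hbc
    · simp
    · rw [Xmat_comm a b, Xmat_comm a c]
      exact two_smul_Xmat_sub_Xmat_mem_bracketSpan_of_ne hbc hab.symm hac.symm
  rcases eq_or_ne a c with rfl | hac
  · exact hshared hab hcd
  · have hsplit : Xmat n a b - Xmat n c d
        = (Xmat n a b - Xmat n a c) + (Xmat n c a - Xmat n c d) := by
      rw [Xmat_comm c a]; abel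
    rw [hsplit, smul_add]
    exact add_mem (hshared hab hac) (hshared hac.symm hcd)

theorem trace_sum_lt_smul_Xmat (c : Fin n × Fin n → ℤ) :
    (∑ p : Fin n × Fin n with p.1 < p.2, c p • Xmat n p.1 p.2).trace
      = 2 * ∑ p : Fin n × Fin n with p.1 < p.2, c p := by
  rw [trace_sum, Finset.mul_sum]
  refine Finset.sum_congr rfl fun p hp => ?_
  rw [trace_smul, trace_Xmat (Finset.mem_filter.mp hp).2.ne, smul_eq_mul, mul_comm]

end

theorem two_G3_le_bracket_G1_G2_general (n : ℕ) (M : Matrix (Fin n) (Fin n) ℤ)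
    (h1 : M.mulVec (fun _ => 1) = 0) (h2 : Mᵀ = M) (h3 : M.trace = 0) :
    2 • M ∈ Submodule.span ℤ
      {C | ∃ A B : Matrix (Fin n) (Fin n) ℤ,
        (A.mulVec (fun _ => 1) = 0 ∧ Aᵀ = A) ∧
        (B.mulVec (fun _ => 1) = 0 ∧ Bᵀ = -B) ∧
        C = A * B - B * A} := by
  have hM := eq_sum_lt_smul_Xmat h1 h2
  have hcoeff : ∑ p : Fin n × Fin n with p.1 < p.2, -M p.1 p.2 = 0 := by
    have htrace := congrArg trace hM
    rw [h3, trace_sum_lt_smul_Xmat] at htrace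
    omega
  -- `2 • M ∈ bracketSpan n` is definitionally membership of `M` in this preimage.
  suffices hhalf : M ∈ (bracketSpan n).comap (2 • LinearMap.id) from hhalf
  rw [hM]
  refine Submodule.sum_smul_mem_of_sum_eq_zero _ hcoeff fun p hp q hq => ?_
  simpa using two_smul_Xmat_sub_Xmat_mem_bracketSpan (Finset.mem_filter.mp hp).2.ne
    (Finset.mem_filter.mp hq).2.ne

/-- For `n ≥ 5`, every element of `2·G₃` lies in the ℤ-span of brackets `⟨A,B⟩`
with `A ∈ G₁` and `B ∈ G₂`. -/
theorem two_G3_le_bracket_G1_G2 (n : ℕ) (hn : 5 ≤ n) (M : Matrix (Fin n) (Fin n) ℤ)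
    (h1 : M.mulVec (fun _ => 1) = 0) (h2 : Mᵀ = M) (h3 : M.trace = 0) :
    2 • M ∈ Submodule.span ℤ
      {C | ∃ A B : Matrix (Fin n) (Fin n) ℤ,
        (A.mulVec (fun _ => 1) = 0 ∧ Aᵀ = A) ∧
        (B.mulVec (fun _ => 1) = 0 ∧ Bᵀ = -B) ∧
        C = A * B - B * A} :=
  two_G3_le_bracket_G1_G2_general n M h1 h2 h3
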